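/- arXiv:2105.01184 — 2 statements merged into one kernel-verified Lean document; each statement's English description precedes it below -/
import Mathlib

section
/- Define the 4-vectors μ = (μ(z))_{z∈T} with μ(z) = W_a^{-1}Σ_{w:A_w=a}U_w(z) for z=(a,b), δ_w = (δ_w(z))_{z∈T} with δ_w(z) = 1(A_w=a)·W_a^{-1}(Û_w(z)−U_w(z)), and δ = Σ_{w=1}^W δ_w. Then Ŷ_ht = μ + δ identically, and under 2^2 split-plot randomization: Cov(μ) = W^{-1}(H∘S_ht), Cov(δ_w) = W^{-2}M_w^{-1}(H_w∘S_w) for each w, Cov(δ) = Σ_{w=1}^W Cov(δ_w) = W^{-1}Ψ, the cross-covariance Cov(μ,δ) = 0, and consequently Cov(Ŷ_ht) = Cov(μ) + Cov(δ). -/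
/-!
Both randomization stages are complete randomizations. Under complete randomization of `k` of
`n` units, the group mean `m_b⁻¹ Σ_{f s = b} x s` is unbiased for the mean of `x`, with
covariance `n⁻¹ (1(b = b') n / m_b - 1) S_xy`; this only needs the first two moments of the
labels, which exchangeability (invariance of the set of labelings under permutations of the
units) pins down. `μ` is the stage-(I) group mean of the `U_w`, which gives `Cov(μ)`. Each
`δ_w` is `1(A_w = a)` times a centred function of the stage-(II) labeling of whole-plot `w`
alone; since these labelings are independent of each other and of stage (I), every cross
covariance involving `δ_w` vanishes, and `Cov(δ_w)` is the stage-(II) group-mean covariance.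
-/

open Finset Matrix Filter
open scoped Classical BigOperators

noncomputable section

namespace SplitPlotPaper

/-- The set of treatment combinations `T = {0,1} × {0,1}`, a pair of the levels of
factor A and factor B. -/
abbrev T : Type := Bool × Bool

section LS

variable {ι κ γ : Type*} [Fintype ι] [Fintype κ] [DecidableEq κ] [Fintype γ] [DecidableEq γ]

/-- The Gram matrix `Dᵀ Π D` of a (weighted) least-squares problem with design matrix `X`
and weights `π`. -/
def gram (X : Matrix ι κ ℝ) (π : ι → ℝ) : Matrix κ κ ℝ :=
  Matrix.of fun k k' => ∑ i, π i * X i k * X i k'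

/-- The (weighted) least-squares coefficient vector `(DᵀΠD)⁻¹ DᵀΠY`. -/
def lsCoef (X : Matrix ι κ ℝ) (π y : ι → ℝ) : κ → ℝ :=
  (gram X π)⁻¹.mulVec fun k => ∑ i, π i * X i k * y i

/-- Residuals of the (weighted) least-squares fit. -/
def lsResid (X : Matrix ι κ ℝ) (π y : ι → ℝ) (i : ι) : ℝ :=
  y i - ∑ k, X i k * lsCoef X π y k

/-- The cluster-robust covariance matrix
`(DᵀΠD)⁻¹ (Σ_c D_cᵀΠ_c e_c e_cᵀ Π_c D_c) (DᵀΠD)⁻¹` for clustering map `c`. -/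
def clusterCov (X : Matrix ι κ ℝ) (π y : ι → ℝ) (c : ι → γ) : Matrix κ κ ℝ :=
  (gram X π)⁻¹ *
    (Matrix.of fun k k' =>
      ∑ g : γ, (∑ i, if c i = g then π i * X i k * lsResid X π y i else 0) *
        (∑ i, if c i = g then π i * X i k' * lsResid X π y i else 0)) *
    (gram X π)⁻¹

/-- The heteroskedasticity-robust (sandwich) covariance matrix. -/
def hcCov (X : Matrix ι κ ℝ) (π y : ι → ℝ) : Matrix κ κ ℝ :=
  (gram X π)⁻¹ *
    (Matrix.of fun k k' => ∑ i, (π i) ^ 2 * (lsResid X π y i) ^ 2 * X i k * X i k') *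
    (gram X π)⁻¹

end LS

/-- A `2²` split-plot design: `W = W0 + W1` whole-plots, whole-plot `w` containing
`M w = M0 w + M1 w` sub-plots, together with fixed potential outcomes `Y`. -/
structure Design where
  W0 : ℕ
  W1 : ℕ
  hW0 : 2 ≤ W0
  hW1 : 2 ≤ W1
  M0 : Fin (W0 + W1) → ℕ
  M1 : Fin (W0 + W1) → ℕ
  hM0 : ∀ w, 2 ≤ M0 w
  hM1 : ∀ w, 2 ≤ M1 w
  Y : (w : Fin (W0 + W1)) → Fin (M0 w + M1 w) → T → ℝ

namespace Design

variable (d : Design)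

/-- Number of whole-plots. -/
abbrev W : ℕ := d.W0 + d.W1

/-- Size of whole-plot `w`. -/
abbrev M (w : Fin d.W) : ℕ := d.M0 w + d.M1 w

/-- Total number of units. -/
def N : ℕ := ∑ w, d.M w

/-- Number of whole-plots assigned level `a` of factor A. -/
def Wa (a : Bool) : ℕ := if a then d.W1 else d.W0

/-- Number of units of whole-plot `w` assigned level `b` of factor B. -/
def Mb (w : Fin d.W) (b : Bool) : ℕ := if b then d.M1 w else d.M0 w

/-- `p_a = W_a / W`. -/
def p (a : Bool) : ℝ := (d.Wa a : ℝ) / (d.W : ℝ)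

/-- `q_{wb} = M_{wb} / M_w`. -/
def q (w : Fin d.W) (b : Bool) : ℝ := (d.Mb w b : ℝ) / (d.M w : ℝ)

/-- Inclusion probability `p_{ws}(z) = p_a q_{wb}` for `z = (a,b)`. -/
def prob (w : Fin d.W) (z : T) : ℝ := d.p z.1 * d.q w z.2

/-- Whole-plot size factor `α_w = W M_w / N`. -/
def alpha (w : Fin d.W) : ℝ := (d.W : ℝ) * (d.M w : ℝ) / (d.N : ℝ)

/-- An assignment: a level of factor A for each whole-plot and a level of factor B
for each unit. -/
abbrev Assign : Type := (Fin d.W → Bool) × ((w : Fin d.W) → Fin (d.M w) → Bool)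

/-- The set of assignments realizable under split-plot randomization: exactly `W1`
whole-plots receive level 1 of factor A, and exactly `M1 w` units of whole-plot `w`
receive level 1 of factor B.  Split-plot randomization is uniform on this set. -/
def Ω : Finset d.Assign :=
  Finset.univ.filter fun ω =>
    ((Finset.univ.filter fun w => ω.1 w = true).card = d.W1) ∧
    (∀ w, (Finset.univ.filter fun s => ω.2 w s = true).card = d.M1 w)

/-- Design-based expectation: average over the uniform distribution on `Ω`. -/
def expect (f : d.Assign → ℝ) : ℝ := (∑ ω ∈ d.Ω, f ω) / (d.Ω.card : ℝ)

/-- Design-based covariance. -/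
def cov (f g : d.Assign → ℝ) : ℝ :=
  d.expect (fun ω => f ω * g ω) - d.expect f * d.expect g

/-- Conditional expectation given an event `E` on assignments. -/
def cexpect (E : d.Assign → Prop) (f : d.Assign → ℝ) : ℝ :=
  (∑ ω ∈ d.Ω.filter E, f ω) / ((d.Ω.filter E).card : ℝ)

/-- Conditional covariance given an event `E` on assignments. -/
def ccov (E : d.Assign → Prop) (f g : d.Assign → ℝ) : ℝ :=
  d.cexpect E (fun ω => f ω * g ω) - d.cexpect E f * d.cexpect E g

/-- Treatment `Z_{ws} = (A_w, B_{ws})` received by unit `(w,s)`. -/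
def Z (ω : d.Assign) (w : Fin d.W) (s : Fin (d.M w)) : T := (ω.1 w, ω.2 w s)

/-- Observed outcome `Y_{ws} = Y_{ws}(Z_{ws})`. -/
def Yobs (ω : d.Assign) (w : Fin d.W) (s : Fin (d.M w)) : ℝ := d.Y w s (d.Z ω w s)

/-- Horvitz–Thompson estimator `Ŷ_ht(z)`. -/
def Yht (ω : d.Assign) (z : T) : ℝ :=
  (d.N : ℝ)⁻¹ * ∑ w, ∑ s, if d.Z ω w s = z then (d.prob w z)⁻¹ * d.Yobs ω w s else 0

/-- `1̂_ht(z)`: the Horvitz–Thompson estimator of the constant 1. -/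
def oneHt (ω : d.Assign) (z : T) : ℝ :=
  (d.N : ℝ)⁻¹ * ∑ w, ∑ s, if d.Z ω w s = z then (d.prob w z)⁻¹ else 0

/-- Hajek estimator `Ŷ_haj(z) = Ŷ_ht(z)/1̂_ht(z)`. -/
def Yhaj (ω : d.Assign) (z : T) : ℝ := d.Yht ω z / d.oneHt ω z

/-- Sample-mean estimator `Ŷ_sm(z)`. -/
def Ysm (ω : d.Assign) (z : T) : ℝ :=
  (∑ w, ∑ s, if d.Z ω w s = z then d.Yobs ω w s else 0) /
    (∑ w, ∑ s, if d.Z ω w s = z then (1 : ℝ) else 0)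

/-- Whole-plot sample mean `Ŷ_w(z)` (zero when whole-plot `w` has no units under `z`). -/
def Yw (ω : d.Assign) (w : Fin d.W) (z : T) : ℝ :=
  (d.Mb w z.2 : ℝ)⁻¹ * ∑ s, if d.Z ω w s = z then d.Yobs ω w s else 0

/-- Scaled whole-plot sample mean `Û_w(z) = α_w Ŷ_w(z)`. -/
def Uw (ω : d.Assign) (w : Fin d.W) (z : T) : ℝ := d.alpha w * d.Yw ω w z

/-- Finite-population average `Ȳ(z)`. -/
def Ybar (z : T) : ℝ := (d.N : ℝ)⁻¹ * ∑ w, ∑ s, d.Y w s z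

/-- Whole-plot average potential outcome `Ȳ_w(z)`. -/
def Ybarw (w : Fin d.W) (z : T) : ℝ := (d.M w : ℝ)⁻¹ * ∑ s, d.Y w s z

/-- Scaled whole-plot total `U_w(z) = α_w Ȳ_w(z)`. -/
def U (w : Fin d.W) (z : T) : ℝ := d.alpha w * d.Ybarw w z

/-- Between whole-plot covariance `S_ht(z,z')`. -/
def Sht (z z' : T) : ℝ :=
  ((d.W : ℝ) - 1)⁻¹ *
    ∑ w, (d.alpha w * d.Ybarw w z - d.Ybar z) * (d.alpha w * d.Ybarw w z' - d.Ybar z')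

/-- Between whole-plot covariance `S_haj(z,z')`. -/
def Shaj (z z' : T) : ℝ :=
  ((d.W : ℝ) - 1)⁻¹ *
    ∑ w, (d.alpha w) ^ 2 * (d.Ybarw w z - d.Ybar z) * (d.Ybarw w z' - d.Ybar z')

/-- Within whole-plot covariance `S_w(z,z')`. -/
def Sw (w : Fin d.W) (z z' : T) : ℝ :=
  ((d.M w : ℝ) - 1)⁻¹ * (d.alpha w) ^ 2 *
    ∑ s, (d.Y w s z - d.Ybarw w z) * (d.Y w s z' - d.Ybarw w z')

/-- Entry `(z,z')` of `H = diag(p₀⁻¹,p₁⁻¹) ⊗ J₂ − J₄`. -/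
def Hmat (z z' : T) : ℝ := (if z.1 = z'.1 then (d.p z.1)⁻¹ else 0) - 1

/-- Entry `(z,z')` of `H_w = diag(p₀⁻¹,p₁⁻¹) ⊗ (diag(q_{w0}⁻¹,q_{w1}⁻¹) − J₂)`,
i.e. `1(a=a')·p_a⁻¹·(q_{wb}⁻¹·1(z=z') − 1)`. -/
def Hw (w : Fin d.W) (z z' : T) : ℝ :=
  if z.1 = z'.1 then (d.p z.1)⁻¹ * ((if z = z' then (d.q w z.2)⁻¹ else 0) - 1) else 0

/-- `Ψ(z,z') = W⁻¹ Σ_w M_w⁻¹ H_w(z,z') S_w(z,z')`. -/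
def Psi (z z' : T) : ℝ := (d.W : ℝ)⁻¹ * ∑ w, (d.M w : ℝ)⁻¹ * d.Hw w z z' * d.Sw w z z'

/-- Sample analog `Ŝ_ht(z,z')` (for `z,z'` sharing the same A-level `z.1`). -/
def ShtHat (ω : d.Assign) (z z' : T) : ℝ :=
  ((d.Wa z.1 : ℝ) - 1)⁻¹ *
    ∑ w, if ω.1 w = z.1 then
        (d.alpha w * d.Yw ω w z - d.Yht ω z) * (d.alpha w * d.Yw ω w z' - d.Yht ω z')
      else 0

/-- Sample analog `Ŝ_haj(z,z')` (for `z,z'` sharing the same A-level `z.1`). -/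
def ShajHat (ω : d.Assign) (z z' : T) : ℝ :=
  ((d.Wa z.1 : ℝ) - 1)⁻¹ *
    ∑ w, if ω.1 w = z.1 then
        (d.alpha w) ^ 2 * (d.Yw ω w z - d.Yhaj ω z) * (d.Yw ω w z' - d.Yhaj ω z')
      else 0

/-- Covariance estimator `V̂_ht` (block-diagonal in the A-levels). -/
def Vht (ω : d.Assign) : Matrix T T ℝ :=
  Matrix.of fun z z' => if z.1 = z'.1 then (d.Wa z.1 : ℝ)⁻¹ * d.ShtHat ω z z' else 0

/-- Covariance estimator `V̂_haj` (block-diagonal in the A-levels). -/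
def Vhaj (ω : d.Assign) : Matrix T T ℝ :=
  Matrix.of fun z z' => if z.1 = z'.1 then (d.Wa z.1 : ℝ)⁻¹ * d.ShajHat ω z z' else 0

/-- Index set of units. -/
abbrev Idx : Type := (w : Fin d.W) × Fin (d.M w)

/-- Design matrix of the unit regression on the four treatment indicators. -/
def Dunit (ω : d.Assign) : Matrix d.Idx T ℝ :=
  Matrix.of fun i z => if d.Z ω i.1 i.2 = z then 1 else 0

/-- Observed outcome vector, indexed by units. -/
def Yv (ω : d.Assign) : d.Idx → ℝ := fun i => d.Yobs ω i.1 i.2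

/-- Inverse-probability weights `p_{ws}(Z_{ws})⁻¹`. -/
def wgt (ω : d.Assign) : d.Idx → ℝ := fun i => (d.prob i.1 (d.Z ω i.1 i.2))⁻¹

/-- Index set of the aggregate regression: pairs `(w,b)`. -/
abbrev AgIdx : Type := Fin d.W × Bool

/-- Design matrix of the aggregate regression on the four treatment indicators. -/
def Dag (ω : d.Assign) : Matrix d.AgIdx T ℝ :=
  Matrix.of fun i z => if (ω.1 i.1, i.2) = z then 1 else 0

/-- Outcome vector of the aggregate regression: `Û_w((A_w, b))`. -/
def Uag (ω : d.Assign) : d.AgIdx → ℝ := fun i => d.Uw ω i.1 (ω.1 i.1, i.2)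

/-- Clustering of units by whole-plot. -/
def clUnit : d.Idx → Fin d.W := fun i => i.1

/-- Clustering of aggregate observations by whole-plot. -/
def clAg : d.AgIdx → Fin d.W := fun i => i.1

/-- OLS coefficients `β_ols` of the unit regression. -/
def betaOls (ω : d.Assign) : T → ℝ := lsCoef (d.Dunit ω) (fun _ => 1) (d.Yv ω)

/-- WLS coefficients `β_wls` of the unit regression with inverse probability weights. -/
def betaWls (ω : d.Assign) : T → ℝ := lsCoef (d.Dunit ω) (d.wgt ω) (d.Yv ω)

/-- OLS coefficients `β_ag` of the aggregate regression. -/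
def betaAg (ω : d.Assign) : T → ℝ := lsCoef (d.Dag ω) (fun _ => 1) (d.Uag ω)

/-- Cluster-robust covariance `Ṽ_ols` of the unweighted unit regression. -/
def Vols (ω : d.Assign) : Matrix T T ℝ :=
  clusterCov (d.Dunit ω) (fun _ => 1) (d.Yv ω) d.clUnit

/-- Cluster-robust covariance `Ṽ_wls` of the weighted unit regression. -/
def Vwls (ω : d.Assign) : Matrix T T ℝ :=
  clusterCov (d.Dunit ω) (d.wgt ω) (d.Yv ω) d.clUnit

/-- Cluster-robust covariance `Ṽ_ag` of the aggregate regression. -/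
def VagCR (ω : d.Assign) : Matrix T T ℝ :=
  clusterCov (d.Dag ω) (fun _ => 1) (d.Uag ω) d.clAg

section Covariates

variable {J : ℕ}

/-- Horvitz–Thompson estimator of the covariate means. -/
def xht (x : (w : Fin d.W) → Fin (d.M w) → Fin J → ℝ) (ω : d.Assign) (z : T) (j : Fin J) : ℝ :=
  (d.N : ℝ)⁻¹ * ∑ w, ∑ s, if d.Z ω w s = z then (d.prob w z)⁻¹ * x w s j else 0

/-- Hajek estimator of the covariate means. -/
def xhaj (x : (w : Fin d.W) → Fin (d.M w) → Fin J → ℝ) (ω : d.Assign) (z : T) (j : Fin J) : ℝ :=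
  d.xht x ω z j / d.oneHt ω z

/-- Sample-mean estimator of the covariate means. -/
def xsm (x : (w : Fin d.W) → Fin (d.M w) → Fin J → ℝ) (ω : d.Assign) (z : T) (j : Fin J) : ℝ :=
  (∑ w, ∑ s, if d.Z ω w s = z then x w s j else 0) /
    (∑ w, ∑ s, if d.Z ω w s = z then (1 : ℝ) else 0)

/-- Whole-plot sample mean of the covariates `x̂_w(z)`. -/
def xw (x : (w : Fin d.W) → Fin (d.M w) → Fin J → ℝ) (ω : d.Assign) (w : Fin d.W) (z : T)
    (j : Fin J) : ℝ :=
  (d.Mb w z.2 : ℝ)⁻¹ * ∑ s, if d.Z ω w s = z then x w s j else 0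

/-- Scaled whole-plot covariate total `v̂_w(z) = α_w x̂_w(z)`. -/
def vw (x : (w : Fin d.W) → Fin (d.M w) → Fin J → ℝ) (ω : d.Assign) (w : Fin d.W) (z : T)
    (j : Fin J) : ℝ :=
  d.alpha w * d.xw x ω w z j

/-- Design matrix of the additive covariate-adjusted unit regression. -/
def DunitF (x : (w : Fin d.W) → Fin (d.M w) → Fin J → ℝ) (ω : d.Assign) :
    Matrix d.Idx (T ⊕ Fin J) ℝ :=
  Matrix.of fun i k =>
    Sum.elim (fun z => if d.Z ω i.1 i.2 = z then (1 : ℝ) else 0) (fun j => x i.1 i.2 j) k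

/-- Design matrix of the additive covariate-adjusted aggregate regression. -/
def DagF (x : (w : Fin d.W) → Fin (d.M w) → Fin J → ℝ) (ω : d.Assign) :
    Matrix d.AgIdx (T ⊕ Fin J) ℝ :=
  Matrix.of fun i k =>
    Sum.elim (fun z => if (ω.1 i.1, i.2) = z then (1 : ℝ) else 0)
      (fun j => d.vw x ω i.1 (ω.1 i.1, i.2) j) k

/-- Design matrix of the fully-interacted covariate-adjusted unit regression. -/
def DunitL (x : (w : Fin d.W) → Fin (d.M w) → Fin J → ℝ) (ω : d.Assign) :
    Matrix d.Idx (T ⊕ T × Fin J) ℝ :=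
  Matrix.of fun i k =>
    Sum.elim (fun z => if d.Z ω i.1 i.2 = z then (1 : ℝ) else 0)
      (fun zj => if d.Z ω i.1 i.2 = zj.1 then x i.1 i.2 zj.2 else 0) k

/-- Design matrix of the fully-interacted covariate-adjusted aggregate regression. -/
def DagL (x : (w : Fin d.W) → Fin (d.M w) → Fin J → ℝ) (ω : d.Assign) :
    Matrix d.AgIdx (T ⊕ T × Fin J) ℝ :=
  Matrix.of fun i k =>
    Sum.elim (fun z => if (ω.1 i.1, i.2) = z then (1 : ℝ) else 0)
      (fun zj => if (ω.1 i.1, i.2) = zj.1 then d.vw x ω i.1 (ω.1 i.1, i.2) zj.2 else 0) k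

end Covariates

/-- Centered factor-A indicator `A_w − 1/2`. -/
def Ac (ω : d.Assign) (w : Fin d.W) : ℝ := (if ω.1 w then 1 else 0) - 1 / 2

/-- Centered factor-B indicator `B_{ws} − 1/2`. -/
def Bcu (ω : d.Assign) (i : d.Idx) : ℝ := (if ω.2 i.1 i.2 then 1 else 0) - 1 / 2

/-- Design matrix of the factor-based unit regression
`Y ~ 1 + (A−1/2) + (B−1/2) + (A−1/2)(B−1/2)`. -/
def Funit (ω : d.Assign) : Matrix d.Idx (Fin 4) ℝ :=
  Matrix.of fun i => ![1, d.Ac ω i.1, d.Bcu ω i, d.Ac ω i.1 * d.Bcu ω i]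

/-- Design matrix of the factor-based aggregate regression
`Û ~ 1 + (A−1/2) + (b−1/2) + (A−1/2)(b−1/2)`. -/
def Fag (ω : d.Assign) : Matrix d.AgIdx (Fin 4) ℝ :=
  Matrix.of fun i =>
    ![1, d.Ac ω i.1, (if i.2 then 1 else 0) - 1 / 2,
      d.Ac ω i.1 * ((if i.2 then 1 else 0) - 1 / 2)]

end Design

/-- The contrast matrix `G₀` with rows `g_A`, `g_B`, `g_AB`. -/
def G0 : Matrix (Fin 3) T ℝ :=
  Matrix.of fun k z =>
    ![(if z.1 then (1 : ℝ) else -1) / 2,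
      (if z.2 then (1 : ℝ) else -1) / 2,
      (if z.1 then (-1 : ℝ) else 1) * (if z.2 then (-1 : ℝ) else 1)] k

namespace Design

variable (d : Design)

/-- `μ(z) = W_a⁻¹ Σ_{w : A_w = a} U_w(z)` for `z = (a,b)`. -/
def mu (ω : d.Assign) (z : T) : ℝ :=
  (d.Wa z.1 : ℝ)⁻¹ * ∑ w, if ω.1 w = z.1 then d.U w z else 0

/-- `δ_w(z) = 1(A_w = a) · W_a⁻¹ (Û_w(z) − U_w(z))` for `z = (a,b)`. -/
def deltaW (w : Fin d.W) (ω : d.Assign) (z : T) : ℝ :=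
  if ω.1 w = z.1 then (d.Wa z.1 : ℝ)⁻¹ * (d.Uw ω w z - d.U w z) else 0

/-- `δ = Σ_w δ_w`. -/
def delta (ω : d.Assign) (z : T) : ℝ := ∑ w, d.deltaW w ω z

end Design

local notation "𝟙" p => (if p then (1 : ℝ) else 0)

lemma expect_sub_expect_mul_sub_expect {β : Type*} {s : Finset β} (hs : s.Nonempty)
    (f g : β → ℝ) :
    𝔼 i ∈ s, (f i - 𝔼 j ∈ s, f j) * (g i - 𝔼 j ∈ s, g j)
      = 𝔼 i ∈ s, f i * g i - (𝔼 i ∈ s, f i) * 𝔼 i ∈ s, g i := by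
  simp only [sub_mul, mul_sub, expect_sub_distrib, ← mul_expect, ← expect_mul, expect_const hs]
  ring

section Labelings

def labelings (α : Type*) [Fintype α] (k : ℕ) : Finset (α → Bool) :=
  univ.filter fun f => (univ.filter fun s => f s = true).card = k

def labelCount (n k : ℕ) (b : Bool) : ℕ := if b then k else n - k

variable {α : Type*} [Fintype α] {k : ℕ}

lemma labelCount_pos {n : ℕ} (hk : 0 < k) (hkn : k < n) (b : Bool) : 0 < labelCount n k b := by
  cases b <;> simp [labelCount] <;> omega

lemma card_filter_eq_labelCount {f : α → Bool} (hf : f ∈ labelings α k) (b : Bool) :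
    (univ.filter fun s => f s = b).card = labelCount (Fintype.card α) k b := by
  have htrue : (univ.filter fun s => f s = true).card = k := (mem_filter.mp hf).2
  cases b
  · have h := card_filter_add_card_filter_not (s := univ) fun s => f s = true
    simp only [Bool.not_eq_true, card_univ] at h
    simp only [labelCount, Bool.false_eq_true, if_false]
    omega
  · exact htrue

lemma labelings_nonempty (hkn : k ≤ Fintype.card α) : (labelings α k).Nonempty := by
  obtain ⟨S, -, hS⟩ := exists_subset_card_eq (s := (univ : Finset α)) (by simpa using hkn)
  refine ⟨fun s => decide (s ∈ S), mem_filter.mpr ⟨mem_univ _, ?_⟩⟩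
  simpa using hS

lemma comp_perm_mem_labelings {f : α → Bool} (hf : f ∈ labelings α k)
    (σ : Equiv.Perm α) : f ∘ σ ∈ labelings α k := by
  refine mem_filter.mpr ⟨mem_univ _, (card_equiv σ fun s => ?_).trans (mem_filter.mp hf).2⟩
  simp

lemma expect_labelings_comp_perm {M : Type*} [AddCommMonoid M] [Module ℚ≥0 M]
    (σ : Equiv.Perm α) (F : (α → Bool) → M) :
    𝔼 f ∈ labelings α k, F (f ∘ σ) = 𝔼 f ∈ labelings α k, F f :=
  expect_nbij' (· ∘ σ) (· ∘ σ.symm) (fun _ hf => comp_perm_mem_labelings hf σ)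
    (fun _ hf => comp_perm_mem_labelings hf σ.symm) (fun f _ => by ext; simp)
    (fun f _ => by ext; simp) fun _ _ => rfl

lemma expect_labelings_indicator (hkn : k ≤ Fintype.card α) (s : α) (b : Bool) :
    𝔼 f ∈ labelings α k, (𝟙 f s = b) = labelCount (Fintype.card α) k b / Fintype.card α := by
  have hn : (Fintype.card α : ℝ) ≠ 0 := Nat.cast_ne_zero.mpr (Fintype.card_pos_iff.mpr ⟨s⟩).ne'
  have hsymm : ∀ t, 𝔼 f ∈ labelings α k, (𝟙 f t = b) = 𝔼 f ∈ labelings α k, (𝟙 f s = b) := by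
    intro t
    rw [← expect_labelings_comp_perm (Equiv.swap s t) fun f => 𝟙 f s = b]
    simp
  have hsum : ∑ t, 𝔼 f ∈ labelings α k, (𝟙 f t = b) = labelCount (Fintype.card α) k b := by
    rw [← expect_sum_comm,
      expect_congr rfl fun f hf => by rw [sum_boole, card_filter_eq_labelCount hf b],
      expect_const (labelings_nonempty hkn)]
  rw [sum_congr rfl fun t _ => hsymm t, sum_const, card_univ, nsmul_eq_mul] at hsum
  rw [← hsum]
  field_simp

lemma expect_labelings_indicator_mul_indicator_self (hkn : k ≤ Fintype.card α) (s : α)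
    (b b' : Bool) :
    𝔼 f ∈ labelings α k, (𝟙 f s = b) * (𝟙 f s = b')
      = (𝟙 b = b') * (labelCount (Fintype.card α) k b / Fintype.card α) := by
  rw [← expect_labelings_indicator hkn s b, mul_expect]
  refine expect_congr rfl fun f _ => ?_
  by_cases h : f s = b <;> by_cases h' : b = b' <;> simp_all

lemma expect_labelings_indicator_mul_indicator (hkn : k ≤ Fintype.card α) {s t : α}
    (hst : s ≠ t) (b b' : Bool) :
    𝔼 f ∈ labelings α k, (𝟙 f s = b) * (𝟙 f t = b')
      = labelCount (Fintype.card α) k b * (labelCount (Fintype.card α) k b' - 𝟙 b = b')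
          / (Fintype.card α * (Fintype.card α - 1)) := by
  set n := Fintype.card α
  set e := fun u => 𝔼 f ∈ labelings α k, (𝟙 f s = b) * (𝟙 f u = b') with he
  have hn : 1 < n := Fintype.one_lt_card_iff.mpr ⟨s, t, hst⟩
  have hn1 : (n : ℝ) - 1 ≠ 0 := by
    have : (1 : ℝ) < n := by exact_mod_cast hn
    linarith
  have hn0 : (n : ℝ) ≠ 0 := by positivity
  have hsymm : ∀ u ∈ univ.erase s, e u = e t := by
    intro u hu
    have hus : u ≠ s := ne_of_mem_erase hu
    simp only [he]
    rw [← expect_labelings_comp_perm (Equiv.swap u t)]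
    simp [Equiv.swap_apply_of_ne_of_ne hus.symm hst]
  have hdiag : e s = (𝟙 b = b') * (labelCount n k b / n) :=
    expect_labelings_indicator_mul_indicator_self hkn s b b'
  have hsum : ∑ u, e u = labelCount n k b' * (labelCount n k b / n) := by
    simp only [he, ← expect_sum_comm, ← mul_sum]
    rw [expect_congr rfl fun f hf => by rw [sum_boole, card_filter_eq_labelCount hf b'],
      ← expect_mul, expect_labelings_indicator hkn s b, mul_comm]
  rw [← add_sum_erase _ _ (mem_univ s), sum_congr rfl hsymm, sum_const, card_erase_of_mem
    (mem_univ s), card_univ, hdiag, nsmul_eq_mul, Nat.cast_sub hn.le] at hsum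
  rw [eq_div_iff (mul_ne_zero hn0 hn1)]
  field_simp at hsum ⊢
  push_cast at hsum
  linear_combination hsum

/-- Normalised by the designed group size, which is the actual one on `labelings α k`. -/
def groupMean (k : ℕ) (b : Bool) (x : α → ℝ) (f : α → Bool) : ℝ :=
  (labelCount (Fintype.card α) k b : ℝ)⁻¹ * ∑ s, if f s = b then x s else 0

def sampleCov (x y : α → ℝ) : ℝ :=
  ((Fintype.card α : ℝ) - 1)⁻¹ * ∑ s, (x s - 𝔼 t, x t) * (y s - 𝔼 t, y t)

lemma groupMean_eq_sum_indicator_mul (b : Bool) (x : α → ℝ) (f : α → Bool) :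
    groupMean k b x f = (labelCount (Fintype.card α) k b : ℝ)⁻¹ * ∑ s, (𝟙 f s = b) * x s := by
  simp only [groupMean, boole_mul]

lemma expect_groupMean (hk : 0 < k) (hkn : k < Fintype.card α) (b : Bool) (x : α → ℝ) :
    𝔼 f ∈ labelings α k, groupMean k b x f = 𝔼 s, x s := by
  have hm : (labelCount (Fintype.card α) k b : ℝ) ≠ 0 := by
    exact_mod_cast (labelCount_pos hk hkn b).ne'
  simp only [groupMean_eq_sum_indicator_mul, ← mul_expect, expect_sum_comm, ← expect_mul,
    expect_labelings_indicator hkn.le, Fintype.expect_eq_sum_div_card, ← mul_sum]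
  field_simp

lemma groupMean_sub_const {f : α → Bool} (hf : f ∈ labelings α k) (hk : 0 < k)
    (hkn : k < Fintype.card α) (b : Bool) (x : α → ℝ) (c : ℝ) :
    groupMean k b x f - c = groupMean k b (fun s => x s - c) f := by
  have hm : (labelCount (Fintype.card α) k b : ℝ) ≠ 0 := by
    exact_mod_cast (labelCount_pos hk hkn b).ne'
  have hcount : ∑ s, (𝟙 f s = b) = (labelCount (Fintype.card α) k b : ℝ) := by
    rw [sum_boole, card_filter_eq_labelCount hf]
  simp only [groupMean_eq_sum_indicator_mul, mul_sub, sum_sub_distrib, ← sum_mul, hcount]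
  field_simp

lemma expect_groupMean_mul_groupMean_eq_sum (S : Finset (α → Bool)) (b b' : Bool)
    (x y : α → ℝ) :
    𝔼 f ∈ S, groupMean k b x f * groupMean k b' y f
      = (labelCount (Fintype.card α) k b : ℝ)⁻¹ * (labelCount (Fintype.card α) k b' : ℝ)⁻¹
          * ∑ s, x s * ∑ t, y t * 𝔼 f ∈ S, (𝟙 f s = b) * (𝟙 f t = b') := by
  have hpointwise : ∀ f, groupMean k b x f * groupMean k b' y f
      = ∑ s, ∑ t, (labelCount (Fintype.card α) k b : ℝ)⁻¹
          * (labelCount (Fintype.card α) k b' : ℝ)⁻¹ * (x s * y t)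
          * ((𝟙 f s = b) * (𝟙 f t = b')) := by
    intro f
    rw [groupMean_eq_sum_indicator_mul, groupMean_eq_sum_indicator_mul, mul_mul_mul_comm,
      sum_mul_sum, mul_sum]
    refine sum_congr rfl fun s _ => ?_
    rw [mul_sum]
    exact sum_congr rfl fun t _ => by ring
  rw [expect_congr rfl fun f _ => hpointwise f, expect_sum_comm, mul_sum]
  refine sum_congr rfl fun s _ => ?_
  rw [expect_sum_comm, mul_sum, mul_sum]
  refine sum_congr rfl fun t _ => ?_
  rw [← mul_expect]
  ring

lemma expect_groupMean_mul_groupMean_of_sum_eq_zero (hk : 0 < k) (hkn : k < Fintype.card α)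
    (b b' : Bool) (x y : α → ℝ) (hy : ∑ s, y s = 0) :
    𝔼 f ∈ labelings α k, groupMean k b x f * groupMean k b' y f
      = (Fintype.card α : ℝ)⁻¹
          * ((if b = b' then (Fintype.card α : ℝ) / labelCount (Fintype.card α) k b else 0) - 1)
          * (((Fintype.card α : ℝ) - 1)⁻¹ * ∑ s, x s * y s) := by
  rw [expect_groupMean_mul_groupMean_eq_sum]
  set n := Fintype.card α
  set m := labelCount n k b
  set c : ℝ := m * (labelCount n k b' - 𝟙 b = b') / (n * (n - 1))
  have hm : (m : ℝ) ≠ 0 := by exact_mod_cast (labelCount_pos hk hkn b).ne'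
  have hm' : (labelCount n k b' : ℝ) ≠ 0 := by exact_mod_cast (labelCount_pos hk hkn b').ne'
  have hn : (n : ℝ) ≠ 0 := Nat.cast_ne_zero.mpr (by omega)
  have hn1 : (n : ℝ) - 1 ≠ 0 := by
    have : (1 : ℝ) < n := by exact_mod_cast (show 1 < n by omega)
    linarith
  -- off the diagonal the second moment is the constant `c`, and `y` sums to zero
  have hinner : ∀ s, ∑ t, y t * 𝔼 f ∈ labelings α k, (𝟙 f s = b) * (𝟙 f t = b')
      = ((𝟙 b = b') * (m / n) - c) * y s := by
    intro s
    have hrest : ∑ t ∈ univ.erase s, y t = -y s := by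
      rw [← add_sum_erase _ _ (mem_univ s)] at hy
      linarith
    rw [← add_sum_erase _ _ (mem_univ s), expect_labelings_indicator_mul_indicator_self hkn.le,
      sum_congr rfl fun t ht => by
        rw [expect_labelings_indicator_mul_indicator hkn.le (ne_of_mem_erase ht).symm],
      ← sum_mul, hrest]
    ring
  rw [sum_congr rfl fun s _ => by rw [hinner s]]
  by_cases h : b = b'
  · subst h
    simp only [if_true, c, mul_left_comm _ (_ - _), ← mul_sum]
    field_simp
    ring
  · simp only [h, if_false, c, mul_left_comm _ (_ - _), ← mul_sum]
    field_simp
    ring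

lemma expect_groupMean_sub_mul_groupMean_sub (hk : 0 < k) (hkn : k < Fintype.card α)
    (b b' : Bool) (x y : α → ℝ) :
    𝔼 f ∈ labelings α k, (groupMean k b x f - 𝔼 s, x s) * (groupMean k b' y f - 𝔼 s, y s)
      = (Fintype.card α : ℝ)⁻¹
          * ((if b = b' then (Fintype.card α : ℝ) / labelCount (Fintype.card α) k b else 0) - 1)
          * sampleCov x y := by
  rw [expect_congr rfl fun f hf => by
    rw [groupMean_sub_const hf hk hkn, groupMean_sub_const hf hk hkn]]
  refine expect_groupMean_mul_groupMean_of_sum_eq_zero hk hkn b b' _ _ ?_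
  rw [sum_sub_distrib, sum_const, card_univ, nsmul_eq_mul, Fintype.card_mul_expect, sub_self]

lemma expect_groupMean_mul_groupMean (hk : 0 < k) (hkn : k < Fintype.card α)
    (b b' : Bool) (x y : α → ℝ) :
    𝔼 f ∈ labelings α k, groupMean k b x f * groupMean k b' y f
      = (𝔼 s, x s) * (𝔼 s, y s) + (Fintype.card α : ℝ)⁻¹
          * ((if b = b' then (Fintype.card α : ℝ) / labelCount (Fintype.card α) k b else 0) - 1)
          * sampleCov x y := by
  have h := expect_sub_expect_mul_sub_expect (labelings_nonempty hkn.le)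
    (groupMean k b x) (groupMean k b' y)
  rw [expect_groupMean hk hkn, expect_groupMean hk hkn,
    expect_groupMean_sub_mul_groupMean_sub hk hkn] at h
  linarith

end Labelings

section PiFinset

variable {ι : Type*} [Fintype ι] [DecidableEq ι] {κ : ι → Type*} (t : ∀ i, Finset (κ i))

lemma expect_piFinset_prod (f : ∀ i, κ i → ℝ) :
    𝔼 B ∈ Fintype.piFinset t, ∏ i, f i (B i) = ∏ i, 𝔼 x ∈ t i, f i x := by
  simp only [expect_eq_sum_div_card, ← prod_univ_sum, Fintype.card_piFinset, Nat.cast_prod,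
    prod_div_distrib]

variable {t}

lemma expect_piFinset_prod_finset (ht : ∀ i, (t i).Nonempty) (S : Finset ι)
    (f : ∀ i, κ i → ℝ) :
    𝔼 B ∈ Fintype.piFinset t, ∏ i ∈ S, f i (B i) = ∏ i ∈ S, 𝔼 x ∈ t i, f i x := by
  have h := expect_piFinset_prod t fun i => if i ∈ S then f i else fun _ => 1
  simp only [ite_apply, prod_ite_mem, univ_inter] at h
  rw [h, ← prod_subset (subset_univ S)]
  · exact prod_congr rfl fun i hi => by simp [hi]
  · intro i _ hi
    simp [hi, expect_const (ht i)]

lemma expect_piFinset_apply (ht : ∀ i, (t i).Nonempty) (f : ∀ i, κ i → ℝ) (w : ι) :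
    𝔼 B ∈ Fintype.piFinset t, f w (B w) = 𝔼 x ∈ t w, f w x := by
  simpa using expect_piFinset_prod_finset ht {w} f

lemma expect_piFinset_apply_mul_apply (ht : ∀ i, (t i).Nonempty) (f g : ∀ i, κ i → ℝ)
    {w v : ι} (hwv : w ≠ v) :
    𝔼 B ∈ Fintype.piFinset t, f w (B w) * g v (B v)
      = (𝔼 x ∈ t w, f w x) * 𝔼 x ∈ t v, g v x := by
  simpa [prod_pair hwv, hwv.symm] using
    expect_piFinset_prod_finset ht {w, v} fun i => if i = w then f i else g i

end PiFinset

namespace Design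

variable (d : Design)

lemma W1_pos : 0 < d.W1 := by have := d.hW1; omega

lemma W1_lt_card : d.W1 < Fintype.card (Fin d.W) := by
  have := d.hW0; simp only [Fintype.card_fin, W]; omega

lemma M1_pos (w : Fin d.W) : 0 < d.M1 w := by have := d.hM1 w; omega

lemma M1_lt_card (w : Fin d.W) : d.M1 w < Fintype.card (Fin (d.M w)) := by
  have := d.hM0 w; simp only [Fintype.card_fin, M]; omega

lemma labelCount_W (a : Bool) : labelCount d.W d.W1 a = d.Wa a := by
  cases a <;> simp [labelCount, Wa]

lemma labelCount_M (w : Fin d.W) (b : Bool) : labelCount (d.M w) (d.M1 w) b = d.Mb w b := by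
  cases b <;> simp [labelCount, Mb]

lemma Wa_ne_zero (a : Bool) : (d.Wa a : ℝ) ≠ 0 := by
  have := d.hW0; have := d.hW1
  cases a <;> simp [Wa] <;> omega

lemma Mb_ne_zero (w : Fin d.W) (b : Bool) : (d.Mb w b : ℝ) ≠ 0 := by
  have := d.hM0 w; have := d.hM1 w
  cases b <;> simp [Mb] <;> omega

lemma W_ne_zero : (d.W : ℝ) ≠ 0 := by have := d.hW1; positivity

lemma M_ne_zero (w : Fin d.W) : (d.M w : ℝ) ≠ 0 := by have := d.hM1 w; positivity

lemma N_ne_zero : (d.N : ℝ) ≠ 0 := by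
  have hpos : 0 < d.N := sum_pos (fun w _ => by have := d.M1_pos w; simp only [M]; omega)
    ⟨⟨0, by have := d.W1_pos; simp only [W]; omega⟩, mem_univ _⟩
  exact_mod_cast hpos.ne'

def ΩA : Finset (Fin d.W → Bool) := labelings (Fin d.W) d.W1

def ΩB (w : Fin d.W) : Finset (Fin (d.M w) → Bool) := labelings (Fin (d.M w)) (d.M1 w)

lemma ΩB_nonempty (w : Fin d.W) : (d.ΩB w).Nonempty :=
  labelings_nonempty (d.M1_lt_card w).le

lemma Ω_eq : d.Ω = d.ΩA ×ˢ Fintype.piFinset d.ΩB := by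
  ext ω
  simp [Ω, ΩA, ΩB, labelings]

lemma expect_eq_expect_Ω (f : d.Assign → ℝ) : d.expect f = 𝔼 ω ∈ d.Ω, f ω :=
  (expect_eq_sum_div_card _ _).symm

lemma expect_eq_mul {f : d.Assign → ℝ} (F : (Fin d.W → Bool) → ℝ)
    (G : ((w : Fin d.W) → Fin (d.M w) → Bool) → ℝ) (hf : ∀ ω, f ω = F ω.1 * G ω.2) :
    d.expect f = (𝔼 A ∈ d.ΩA, F A) * 𝔼 B ∈ Fintype.piFinset d.ΩB, G B := by
  rw [expect_eq_expect_Ω, Ω_eq, expect_product, expect_mul_expect]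
  exact expect_congr rfl fun A _ => expect_congr rfl fun B _ => hf (A, B)

def Uhat (w : Fin d.W) (z : T) (x : Fin (d.M w) → Bool) : ℝ :=
  d.alpha w * groupMean (d.M1 w) z.2 (fun s => d.Y w s z) x

lemma Uw_eq_Uhat {ω : d.Assign} {w : Fin d.W} {z : T} (h : ω.1 w = z.1) :
    d.Uw ω w z = d.Uhat w z (ω.2 w) := by
  have hZ : ∀ s, d.Z ω w s = z ↔ ω.2 w s = z.2 := fun s => by
    simp [Z, Prod.ext_iff, h]
  simp only [Uw, Yw, Uhat, groupMean, Fintype.card_fin, labelCount_M]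
  congr 2
  refine sum_congr rfl fun s _ => ?_
  by_cases hs : ω.2 w s = z.2
  · rw [if_pos ((hZ s).mpr hs), if_pos hs, Yobs, (hZ s).mpr hs]
  · rw [if_neg (mt (hZ s).mp hs), if_neg hs]

lemma Yht_eq_sum (ω : d.Assign) (z : T) :
    d.Yht ω z = ∑ w, if ω.1 w = z.1 then (d.Wa z.1 : ℝ)⁻¹ * d.Uw ω w z else 0 := by
  rw [Yht, mul_sum]
  refine sum_congr rfl fun w _ => ?_
  split_ifs with hA
  · simp only [Uw, Yw, alpha, prob, p, q, mul_sum, mul_ite, mul_zero]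
    refine sum_congr rfl fun s _ => if_congr Iff.rfl ?_ rfl
    have := d.Wa_ne_zero z.1; have := d.Mb_ne_zero w z.2; have := d.M_ne_zero w
    have := d.W_ne_zero; have := d.N_ne_zero
    field_simp
  · refine (mul_eq_zero_of_right _ (sum_eq_zero fun s _ => if_neg fun hz => hA ?_))
    rw [← hz]
    rfl

lemma mu_eq_groupMean (ω : d.Assign) (z : T) :
    d.mu ω z = groupMean d.W1 z.1 (fun w => d.U w z) ω.1 := by
  simp only [mu, groupMean, Fintype.card_fin, labelCount_W]

def deltaHat (w : Fin d.W) (z : T) (x : Fin (d.M w) → Bool) : ℝ :=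
  (d.Wa z.1 : ℝ)⁻¹ * (d.Uhat w z x - d.U w z)

lemma deltaW_eq (w : Fin d.W) (ω : d.Assign) (z : T) :
    d.deltaW w ω z = (𝟙 ω.1 w = z.1) * d.deltaHat w z (ω.2 w) := by
  by_cases h : ω.1 w = z.1
  · simp [deltaW, deltaHat, h, Uw_eq_Uhat d h]
  · simp [deltaW, h]

lemma Yht_eq_mu_add_delta (ω : d.Assign) (z : T) : d.Yht ω z = d.mu ω z + d.delta ω z := by
  simp only [Yht_eq_sum, mu, delta, deltaW, mul_sum, ← sum_add_distrib]
  refine sum_congr rfl fun w _ => ?_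
  split_ifs <;> ring

lemma expect_Y (w : Fin d.W) (z : T) : 𝔼 s, d.Y w s z = d.Ybarw w z := by
  rw [Fintype.expect_eq_sum_div_card, Fintype.card_fin, Ybarw, div_eq_inv_mul]

lemma expect_U (z : T) : 𝔼 w, d.U w z = d.Ybar z := by
  rw [Fintype.expect_eq_sum_div_card, Fintype.card_fin, Ybar, mul_sum, sum_div]
  refine sum_congr rfl fun w _ => ?_
  have := d.W_ne_zero; have := d.M_ne_zero w; have := d.N_ne_zero
  simp only [U, alpha, Ybarw]
  field_simp

lemma Sw_eq_sampleCov (w : Fin d.W) (z z' : T) :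
    d.Sw w z z' = d.alpha w ^ 2 * sampleCov (fun s => d.Y w s z) (fun s => d.Y w s z') := by
  simp only [Sw, sampleCov, expect_Y, Fintype.card_fin]
  ring

lemma Sht_eq_sampleCov (z z' : T) :
    d.Sht z z' = sampleCov (fun w => d.U w z) (fun w => d.U w z') := by
  simp only [Sht, sampleCov, expect_U, Fintype.card_fin]
  rfl

lemma expect_Uhat (w : Fin d.W) (z : T) : 𝔼 x ∈ d.ΩB w, d.Uhat w z x = d.U w z := by
  simp only [U, ← expect_Y, Uhat]
  rw [← mul_expect, ΩB, expect_groupMean (d.M1_pos w) (d.M1_lt_card w)]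

lemma expect_Uhat_sub_mul_Uhat_sub (w : Fin d.W) (z z' : T) :
    𝔼 x ∈ d.ΩB w, (d.Uhat w z x - d.U w z) * (d.Uhat w z' x - d.U w z')
      = (d.M w : ℝ)⁻¹ * ((if z.2 = z'.2 then (d.q w z.2)⁻¹ else 0) - 1) * d.Sw w z z' := by
  have hcov := expect_groupMean_sub_mul_groupMean_sub (d.M1_pos w) (d.M1_lt_card w) z.2 z'.2
    (fun s => d.Y w s z) (fun s => d.Y w s z')
  simp only [Fintype.card_fin, labelCount_M, expect_Y] at hcov
  simp only [Uhat, U, ← mul_sub, mul_mul_mul_comm, ← mul_expect]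
  rw [ΩB, hcov, Sw_eq_sampleCov, q, inv_div]
  ring

lemma expect_deltaHat (w : Fin d.W) (z : T) : 𝔼 x ∈ d.ΩB w, d.deltaHat w z x = 0 := by
  simp only [deltaHat]
  rw [← mul_expect, expect_sub_distrib, expect_Uhat, expect_const (d.ΩB_nonempty w), sub_self,
    mul_zero]

lemma expect_deltaHat_mul_deltaHat (w : Fin d.W) (z z' : T) :
    𝔼 x ∈ d.ΩB w, d.deltaHat w z x * d.deltaHat w z' x
      = (d.Wa z.1 : ℝ)⁻¹ * (d.Wa z'.1 : ℝ)⁻¹ * (d.M w : ℝ)⁻¹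
          * ((if z.2 = z'.2 then (d.q w z.2)⁻¹ else 0) - 1) * d.Sw w z z' := by
  have hpointwise : ∀ x, d.deltaHat w z x * d.deltaHat w z' x = (d.Wa z.1 : ℝ)⁻¹
      * (d.Wa z'.1 : ℝ)⁻¹ * ((d.Uhat w z x - d.U w z) * (d.Uhat w z' x - d.U w z')) :=
    fun x => by simp only [deltaHat]; ring
  rw [expect_congr rfl fun x _ => hpointwise x, ← mul_expect, expect_Uhat_sub_mul_Uhat_sub]
  ring

lemma expect_ΩA_indicator_mul_indicator (w : Fin d.W) (a a' : Bool) :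
    𝔼 A ∈ d.ΩA, (𝟙 A w = a) * (𝟙 A w = a') = (𝟙 a = a') * d.p a := by
  rw [ΩA, expect_labelings_indicator_mul_indicator_self d.W1_lt_card.le,
    Fintype.card_fin, labelCount_W, p]

lemma expect_of_fst (F : (Fin d.W → Bool) → ℝ) :
    d.expect (fun ω => F ω.1) = 𝔼 A ∈ d.ΩA, F A := by
  rw [d.expect_eq_mul F (fun _ => 1) fun ω => (mul_one _).symm,
    expect_const (Fintype.piFinset_nonempty.mpr d.ΩB_nonempty), mul_one]

lemma expect_mu (z : T) : d.expect (fun ω => d.mu ω z) = d.Ybar z := by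
  simp only [mu_eq_groupMean]
  rw [expect_of_fst, ΩA, expect_groupMean d.W1_pos d.W1_lt_card, expect_U]

lemma cov_comm (f g : d.Assign → ℝ) : d.cov f g = d.cov g f := by
  simp only [cov, mul_comm]

lemma cov_add_left (f g h : d.Assign → ℝ) :
    d.cov (fun ω => f ω + g ω) h = d.cov f h + d.cov g h := by
  simp only [cov, expect_eq_expect_Ω, add_mul, expect_add_distrib]
  ring

lemma cov_add_right (f g h : d.Assign → ℝ) :
    d.cov f (fun ω => g ω + h ω) = d.cov f g + d.cov f h := by
  rw [cov_comm, cov_add_left, cov_comm, cov_comm d h]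

lemma cov_sum_left {ι : Type*} (s : Finset ι) (f : ι → d.Assign → ℝ) (g : d.Assign → ℝ) :
    d.cov (fun ω => ∑ i ∈ s, f i ω) g = ∑ i ∈ s, d.cov (f i) g := by
  simp only [cov, expect_eq_expect_Ω, sum_mul, expect_sum_comm, sum_sub_distrib]

lemma cov_sum_right {ι : Type*} (s : Finset ι) (f : d.Assign → ℝ) (g : ι → d.Assign → ℝ) :
    d.cov f (fun ω => ∑ i ∈ s, g i ω) = ∑ i ∈ s, d.cov f (g i) := by
  rw [cov_comm, cov_sum_left]
  exact sum_congr rfl fun i _ => cov_comm d _ _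

lemma cov_mu (z z' : T) :
    d.cov (fun ω => d.mu ω z) (fun ω => d.mu ω z') = (d.W : ℝ)⁻¹ * (d.Hmat z z' * d.Sht z z') := by
  rw [cov, expect_mu, expect_mu]
  simp only [mu_eq_groupMean]
  rw [expect_of_fst d fun A => groupMean d.W1 z.1 (fun w => d.U w z) A
      * groupMean d.W1 z'.1 (fun w => d.U w z') A, ΩA,
    expect_groupMean_mul_groupMean d.W1_pos d.W1_lt_card,
    expect_U, expect_U]
  simp only [Fintype.card_fin, labelCount_W, Hmat, p, inv_div, Sht_eq_sampleCov]
  ring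

lemma expect_deltaW (w : Fin d.W) (z : T) : d.expect (fun ω => d.deltaW w ω z) = 0 := by
  rw [d.expect_eq_mul (fun A => 𝟙 A w = z.1) (fun B => d.deltaHat w z (B w))
      fun ω => deltaW_eq d w ω z,
    expect_piFinset_apply d.ΩB_nonempty (fun i => d.deltaHat i z), expect_deltaHat, mul_zero]

lemma cov_deltaW (w : Fin d.W) (z z' : T) :
    d.cov (fun ω => d.deltaW w ω z) (fun ω => d.deltaW w ω z')
      = (d.W : ℝ)⁻¹ * (d.W : ℝ)⁻¹ * (d.M w : ℝ)⁻¹ * (d.Hw w z z' * d.Sw w z z') := by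
  rw [cov, expect_deltaW, zero_mul, sub_zero,
    d.expect_eq_mul (fun A => (𝟙 A w = z.1) * (𝟙 A w = z'.1))
      (fun B => d.deltaHat w z (B w) * d.deltaHat w z' (B w))
      fun ω => by rw [deltaW_eq, deltaW_eq]; ring,
    expect_ΩA_indicator_mul_indicator,
    expect_piFinset_apply d.ΩB_nonempty (fun i x => d.deltaHat i z x * d.deltaHat i z' x),
    expect_deltaHat_mul_deltaHat]
  by_cases ha : z.1 = z'.1
  · have hz : z = z' ↔ z.2 = z'.2 := by simp [Prod.ext_iff, ha]
    simp only [Hw, ha, if_true, if_congr hz rfl rfl, p, inv_div]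
    have := d.Wa_ne_zero z'.1; have := d.W_ne_zero
    field_simp
  · simp [Hw, ha]

lemma cov_deltaW_of_ne {w v : Fin d.W} (hwv : w ≠ v) (z z' : T) :
    d.cov (fun ω => d.deltaW w ω z) (fun ω => d.deltaW v ω z') = 0 := by
  rw [cov, expect_deltaW, zero_mul, sub_zero,
    d.expect_eq_mul (fun A => (𝟙 A w = z.1) * (𝟙 A v = z'.1))
      (fun B => d.deltaHat w z (B w) * d.deltaHat v z' (B v))
      fun ω => by rw [deltaW_eq, deltaW_eq]; ring,
    expect_piFinset_apply_mul_apply d.ΩB_nonempty (fun i => d.deltaHat i z)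
      (fun i => d.deltaHat i z') hwv,
    expect_deltaHat, zero_mul, mul_zero]

lemma cov_mu_deltaW (v : Fin d.W) (z z' : T) :
    d.cov (fun ω => d.mu ω z) (fun ω => d.deltaW v ω z') = 0 := by
  rw [cov, expect_deltaW, mul_zero, sub_zero,
    d.expect_eq_mul (fun A => groupMean d.W1 z.1 (fun w => d.U w z) A * (𝟙 A v = z'.1))
      (fun B => d.deltaHat v z' (B v))
      fun ω => by rw [mu_eq_groupMean, deltaW_eq]; ring,
    expect_piFinset_apply d.ΩB_nonempty (fun i => d.deltaHat i z'), expect_deltaHat, mul_zero]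

lemma cov_delta_eq_sum (z z' : T) :
    d.cov (fun ω => d.delta ω z) (fun ω => d.delta ω z')
      = ∑ w, d.cov (fun ω => d.deltaW w ω z) (fun ω => d.deltaW w ω z') := by
  simp only [delta]
  rw [cov_sum_left]
  refine sum_congr rfl fun w _ => ?_
  rw [cov_sum_right, sum_eq_single w (fun v _ hvw => d.cov_deltaW_of_ne hvw.symm z z')
    (by simp)]

lemma cov_delta (z z' : T) :
    d.cov (fun ω => d.delta ω z) (fun ω => d.delta ω z') = (d.W : ℝ)⁻¹ * d.Psi z z' := by
  rw [cov_delta_eq_sum, Psi, mul_sum, mul_sum]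
  exact sum_congr rfl fun w _ => by rw [cov_deltaW]; ring

lemma cov_mu_delta (z z' : T) :
    d.cov (fun ω => d.mu ω z) (fun ω => d.delta ω z') = 0 := by
  simp only [delta]
  rw [cov_sum_right]
  exact sum_eq_zero fun v _ => d.cov_mu_deltaW v z z'

lemma cov_Yht (z z' : T) :
    d.cov (fun ω => d.Yht ω z) (fun ω => d.Yht ω z')
      = d.cov (fun ω => d.mu ω z) (fun ω => d.mu ω z')
        + d.cov (fun ω => d.delta ω z) (fun ω => d.delta ω z') := by
  simp only [Yht_eq_mu_add_delta]
  rw [cov_add_left, cov_add_right, cov_add_right, cov_mu_delta,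
    cov_comm d (fun ω => d.delta ω z), cov_mu_delta]
  ring

end Design

/-- The decomposition `Ŷ_ht = μ + δ`, and under 2² split-plot
randomization: `Cov(μ) = W⁻¹ (H∘S_ht)`, `Cov(δ_w) = W⁻² M_w⁻¹ (H_w∘S_w)`,
`Cov(δ) = Σ_w Cov(δ_w) = W⁻¹ Ψ`, `Cov(μ,δ) = 0`, and consequently
`Cov(Ŷ_ht) = Cov(μ) + Cov(δ)` (all stated entrywise). -/
theorem yht_decomposition (d : Design) :
    (∀ ω ∈ d.Ω, ∀ z : T, d.Yht ω z = d.mu ω z + d.delta ω z) ∧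
    (∀ z z' : T, d.cov (fun ω => d.mu ω z) (fun ω => d.mu ω z')
        = (d.W : ℝ)⁻¹ * (d.Hmat z z' * d.Sht z z')) ∧
    (∀ (w : Fin d.W) (z z' : T),
        d.cov (fun ω => d.deltaW w ω z) (fun ω => d.deltaW w ω z')
          = (d.W : ℝ)⁻¹ * (d.W : ℝ)⁻¹ * (d.M w : ℝ)⁻¹ * (d.Hw w z z' * d.Sw w z z')) ∧
    (∀ z z' : T, d.cov (fun ω => d.delta ω z) (fun ω => d.delta ω z')
        = ∑ w, d.cov (fun ω => d.deltaW w ω z) (fun ω => d.deltaW w ω z')) ∧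
    (∀ z z' : T, d.cov (fun ω => d.delta ω z) (fun ω => d.delta ω z')
        = (d.W : ℝ)⁻¹ * d.Psi z z') ∧
    (∀ z z' : T, d.cov (fun ω => d.mu ω z) (fun ω => d.delta ω z') = 0) ∧
    (∀ z z' : T, d.cov (fun ω => d.Yht ω z) (fun ω => d.Yht ω z')
        = d.cov (fun ω => d.mu ω z) (fun ω => d.mu ω z')
          + d.cov (fun ω => d.delta ω z) (fun ω => d.delta ω z')) :=
  ⟨fun ω _ z => d.Yht_eq_mu_add_delta ω z, d.cov_mu, d.cov_deltaW, d.cov_delta_eq_sum,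
    d.cov_delta, d.cov_mu_delta, d.cov_Yht⟩

end SplitPlotPaper
end
end

section
/- For every realization of the 2^2 split-plot assignment, the three least-squares coefficient vectors equal the three design-based estimators: β_ols = Ŷ_sm, β_wls = Ŷ_haj, and β_ag = Ŷ_ht (componentwise over z∈T). -/
open Finset Matrix Filter
open scoped Classical BigOperators

noncomputable section

namespace SplitPlotPaper

/-! Regressing on the four treatment indicators is saturated: the Gram matrix is diagonal and
each coefficient is the weighted mean of the outcome over the observations with that
treatment. Unit weights give the sample mean and inverse-probability weights the Hajek
estimator. In the aggregate regression the weights are uniform, but the outcome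
`Û_w(z) = α_w Ŷ_w(z)` already carries the factor `W_a⁻¹ α_w M_{wb}⁻¹ = N⁻¹ p_{ws}(z)⁻¹`, so the
mean over the `W_a` whole-plots at level `a` is the Horvitz–Thompson estimator. A realizable
assignment gives every treatment to some unit, so no mean has an empty denominator. -/

section IndicatorRegression

variable {ι κ : Type*} [Fintype ι] [DecidableEq κ]

lemma gram_indicator [Fintype κ] (f : ι → κ) (π : ι → ℝ) :
    gram (Matrix.of fun i k => if f i = k then (1 : ℝ) else 0) π =
      Matrix.diagonal fun k => ∑ i, if f i = k then π i else 0 := by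
  ext k k'
  rw [gram, Matrix.of_apply, Matrix.diagonal_apply]
  split_ifs with h
  · subst h
    exact Finset.sum_congr rfl fun i _ => by simp only [Matrix.of_apply]; split_ifs <;> simp
  · exact Finset.sum_eq_zero fun i _ => by simp only [Matrix.of_apply]; split_ifs <;> simp_all

lemma lsCoef_indicator [Fintype κ] (f : ι → κ) (π y : ι → ℝ)
    (hπ : ∀ k, (∑ i, if f i = k then π i else 0) ≠ 0) (k : κ) :
    lsCoef (Matrix.of fun i k => if f i = k then (1 : ℝ) else 0) π y k =
      (∑ i, if f i = k then π i else 0)⁻¹ * ∑ i, if f i = k then π i * y i else 0 := by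
  have hinv : (Matrix.diagonal fun k => ∑ i, if f i = k then π i else 0)⁻¹ =
      Matrix.diagonal fun k => (∑ i, if f i = k then π i else 0)⁻¹ :=
    Matrix.inv_eq_right_inv <| by
      rw [Matrix.diagonal_mul_diagonal, ← Matrix.diagonal_one]
      exact congrArg _ (funext fun k => mul_inv_cancel₀ (hπ k))
  rw [lsCoef, gram_indicator, hinv, Matrix.mulVec_diagonal]
  exact congrArg _ <| Finset.sum_congr rfl fun i _ => by
    simp only [Matrix.of_apply]; split_ifs <;> simp

lemma sum_indicator_pos {f : ι → κ} (hf : Function.Surjective f) {π : ι → ℝ}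
    (hπ : ∀ i, 0 < π i) (k : κ) : 0 < ∑ i, if f i = k then π i else 0 := by
  obtain ⟨i, rfl⟩ := hf k
  exact Finset.sum_pos' (fun j _ => by split_ifs <;> [exact (hπ j).le; rfl])
    ⟨i, Finset.mem_univ i, by simpa using hπ i⟩

lemma lsCoef_indicator_of_surjective [Fintype κ] {f : ι → κ} (hf : Function.Surjective f)
    {π : ι → ℝ} (hπ : ∀ i, 0 < π i) (y : ι → ℝ) (k : κ) :
    lsCoef (Matrix.of fun i k => if f i = k then (1 : ℝ) else 0) π y k =
      (∑ i, if f i = k then π i else 0)⁻¹ * ∑ i, if f i = k then π i * y i else 0 :=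
  lsCoef_indicator f π y (fun k => (sum_indicator_pos hf hπ k).ne') k

end IndicatorRegression

lemma card_filter_eq_ite {α : Type*} [Fintype α] {m₀ m₁ : ℕ} (hα : Fintype.card α = m₀ + m₁)
    (g : α → Bool) (h : #{x | g x = true} = m₁) (b : Bool) :
    #{x | g x = b} = if b then m₁ else m₀ := by
  cases b
  · have := Finset.card_filter_add_card_filter_not (s := Finset.univ) fun x => g x = true
    simp only [Bool.not_eq_true, Finset.card_univ, hα, h] at this
    simp only [Bool.false_eq_true, if_false]
    omega
  · exact h

lemma sum_prod_indicator {α γ δ : Type*} [Fintype α] [Fintype γ] [DecidableEq δ]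
    [DecidableEq γ] (f : α → δ) (z : δ × γ) (g : α × γ → ℝ) :
    ∑ x : α × γ, (if (f x.1, x.2) = z then g x else 0) =
      ∑ a, if f a = z.1 then g (a, z.2) else 0 := by
  rw [Fintype.sum_prod_type]
  refine Finset.sum_congr rfl fun a _ => ?_
  simp only [Prod.ext_iff, ite_and, Finset.sum_ite_irrel, Finset.sum_ite_eq']
  simp

namespace Design

variable (d : Design)

lemma Wa_pos (a : Bool) : 0 < d.Wa a := by
  have := d.hW0; have := d.hW1
  cases a <;> simp only [Wa, Bool.false_eq_true, if_true, if_false] <;> omega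

lemma Mb_pos (w : Fin d.W) (b : Bool) : 0 < d.Mb w b := by
  have := d.hM0 w; have := d.hM1 w
  cases b <;> simp only [Mb, Bool.false_eq_true, if_true, if_false] <;> omega

lemma W_pos : 0 < d.W := Nat.add_pos_left (by have := d.hW0; omega) _

lemma M_pos (w : Fin d.W) : 0 < d.M w := Nat.add_pos_left (by have := d.hM0 w; omega) _

lemma N_pos : 0 < d.N :=
  have : Nonempty (Fin d.W) := ⟨⟨0, d.W_pos⟩⟩
  Finset.sum_pos (fun w _ => d.M_pos w) Finset.univ_nonempty

lemma prob_pos (w : Fin d.W) (z : T) : 0 < d.prob w z := by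
  have := d.Wa_pos z.1; have := d.Mb_pos w z.2; have := d.W_pos; have := d.M_pos w
  unfold prob p q; positivity

lemma inv_Wa_mul_alpha_mul_inv_Mb (w : Fin d.W) (z : T) :
    (d.Wa z.1 : ℝ)⁻¹ * (d.alpha w * (d.Mb w z.2 : ℝ)⁻¹) = (d.N : ℝ)⁻¹ * (d.prob w z)⁻¹ := by
  have := d.Wa_pos z.1; have := d.Mb_pos w z.2; have := d.N_pos; have := d.W_pos
  have := d.M_pos w
  unfold alpha prob p q
  field_simp

variable {d} {ω : d.Assign}

lemma card_filter_A_eq (hω : ω ∈ d.Ω) (a : Bool) : #{w | ω.1 w = a} = d.Wa a :=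
  card_filter_eq_ite (Fintype.card_fin _) _ (Finset.mem_filter.1 hω).2.1 a

lemma card_filter_B_eq (hω : ω ∈ d.Ω) (w : Fin d.W) (b : Bool) :
    #{s | ω.2 w s = b} = d.Mb w b :=
  card_filter_eq_ite (Fintype.card_fin _) _ ((Finset.mem_filter.1 hω).2.2 w) b

lemma exists_A_eq (hω : ω ∈ d.Ω) (a : Bool) : ∃ w, ω.1 w = a := by
  obtain ⟨w, hw⟩ := Finset.card_pos.1 ((card_filter_A_eq hω a).symm ▸ d.Wa_pos a)
  exact ⟨w, (Finset.mem_filter.1 hw).2⟩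

lemma exists_B_eq (hω : ω ∈ d.Ω) (w : Fin d.W) (b : Bool) : ∃ s, ω.2 w s = b := by
  obtain ⟨s, hs⟩ := Finset.card_pos.1 ((card_filter_B_eq hω w b).symm ▸ d.Mb_pos w b)
  exact ⟨s, (Finset.mem_filter.1 hs).2⟩

lemma Z_surjective (hω : ω ∈ d.Ω) : Function.Surjective fun i : d.Idx => d.Z ω i.1 i.2 := by
  rintro ⟨a, b⟩
  obtain ⟨w, rfl⟩ := exists_A_eq hω a
  obtain ⟨s, rfl⟩ := exists_B_eq hω w b
  exact ⟨⟨w, s⟩, rfl⟩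

lemma agTreatment_surjective (hω : ω ∈ d.Ω) :
    Function.Surjective fun i : d.AgIdx => (ω.1 i.1, i.2) := by
  rintro ⟨a, b⟩
  obtain ⟨w, rfl⟩ := exists_A_eq hω a
  exact ⟨(w, b), rfl⟩

lemma betaOls_eq_Ysm (hω : ω ∈ d.Ω) (z : T) : d.betaOls ω z = d.Ysm ω z := by
  rw [betaOls, Dunit, lsCoef_indicator_of_surjective (Z_surjective hω) (fun _ => one_pos), Ysm,
    div_eq_inv_mul, Fintype.sum_sigma, Fintype.sum_sigma]
  simp only [one_mul, Yv]

lemma betaWls_eq_Yhaj (hω : ω ∈ d.Ω) (z : T) : d.betaWls ω z = d.Yhaj ω z := by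
  have hwgt : ∀ i, 0 < d.wgt ω i := fun _ => inv_pos.2 (d.prob_pos _ _)
  rw [betaWls, Dunit, lsCoef_indicator_of_surjective (Z_surjective hω) hwgt, Yhaj, Yht, oneHt,
    mul_div_mul_left _ _ (inv_ne_zero (Nat.cast_ne_zero.2 d.N_pos.ne')),
    div_eq_inv_mul, Fintype.sum_sigma, Fintype.sum_sigma]
  simp +contextual only [wgt, Yv]

lemma Yht_eq_inv_Wa_mul_sum_Uw (ω : d.Assign) (z : T) :
    d.Yht ω z = (d.Wa z.1 : ℝ)⁻¹ * ∑ w, if ω.1 w = z.1 then d.Uw ω w z else 0 := by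
  rw [Yht, Finset.mul_sum, Finset.mul_sum]
  refine Finset.sum_congr rfl fun w _ => ?_
  split_ifs with h
  · rw [Uw, Yw, ← mul_assoc (d.alpha w), ← mul_assoc, inv_Wa_mul_alpha_mul_inv_Mb, mul_assoc,
      Finset.mul_sum (s := Finset.univ) (a := (d.prob w z)⁻¹)]
    simp only [mul_ite_zero]
  · rw [mul_zero, Finset.sum_eq_zero fun s _ => if_neg fun hz => h (congrArg Prod.fst hz),
      mul_zero]

lemma betaAg_eq_inv_Wa_mul_sum_Uw (hω : ω ∈ d.Ω) (z : T) :
    d.betaAg ω z = (d.Wa z.1 : ℝ)⁻¹ * ∑ w, if ω.1 w = z.1 then d.Uw ω w z else 0 := by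
  rw [betaAg, Dag, lsCoef_indicator_of_surjective (agTreatment_surjective hω) (fun _ => one_pos),
    sum_prod_indicator, sum_prod_indicator, Finset.sum_boole, card_filter_A_eq hω]
  congr 1
  exact Finset.sum_congr rfl fun w _ => by split_ifs with h <;> simp [Uag, h]

lemma betaAg_eq_Yht (hω : ω ∈ d.Ω) (z : T) : d.betaAg ω z = d.Yht ω z :=
  (betaAg_eq_inv_Wa_mul_sum_Uw hω z).trans (Yht_eq_inv_Wa_mul_sum_Uw ω z).symm

end Design

/-- For every realization of the 2² split-plot assignment, the three
least-squares coefficient vectors equal the three design-based estimators: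
`β_ols = Ŷ_sm`, `β_wls = Ŷ_haj`, and `β_ag = Ŷ_ht` (componentwise over `z ∈ T`). -/
theorem regression_equals_design_estimators (d : Design) :
    ∀ ω ∈ d.Ω, ∀ z : T,
      d.betaOls ω z = d.Ysm ω z ∧ d.betaWls ω z = d.Yhaj ω z ∧
      d.betaAg ω z = d.Yht ω z := fun _ hω z =>
  ⟨Design.betaOls_eq_Ysm hω z, Design.betaWls_eq_Yhaj hω z, Design.betaAg_eq_Yht hω z⟩

end SplitPlotPaper
end
end
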